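/- Let U_n ⊆ B(H), n ∈ ℕ, be weak* closed hyperreflexive subspaces with U_{n+1} ⊆ U_n for all n and sup_n k(U_n) < ∞. Then U = ⋂_n U_n is hyperreflexive and k(U) ≤ limsup_n k(U_n). -/

import Mathlib

/-!
Fix `k > limsupₙ k(Uₙ)`, an operator `T` and `ε > 0`, and let `α = α(T, ⋂ Uₙ)`. Since
`α(T, Uₙ) ≤ α` and eventually `k(Uₙ) < k`, each late `Uₙ` meets the closed ball `B(T, kα + ε)`.
Closed balls of `B(H)` are weak* compact: they are compact for the weak operator topology
(Tychonoff plus the Riesz representation of bounded sesquilinear forms), and on bounded sets every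
normal functional, a uniformly convergent series of vector functionals, is WOT-continuous. Cantor's
intersection theorem for the weak* closed sets `B(T, kα + ε) ∩ Uₙ` then gives a point of `⋂ Uₙ`
within `kα + ε` of `T`, so `k` is a hyperreflexivity constant of `⋂ Uₙ`.
-/

open scoped InnerProductSpace Pointwise

noncomputable section

namespace SchurHyper

/-- `B H` is the algebra of bounded linear operators on `H`. -/
abbrev B (H : Type*) [NormedAddCommGroup H] [InnerProductSpace ℂ H] : Type _ := H →L[ℂ] H

variable (H : Type*) [NormedAddCommGroup H] [InnerProductSpace ℂ H]

/-- A linear functional on `B H` is *normal* (weak* continuous) if it arises from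
the duality with the trace class, i.e. it is of the form
`T ↦ ∑ₙ ⟪yₙ, T xₙ⟫` for square-summable sequences `(xₙ)`, `(yₙ)`
(recall that the inner product is conjugate-linear in its first slot). -/
def IsNormalFunctional (ω : B H →ₗ[ℂ] ℂ) : Prop :=
  ∃ x y : ℕ → H, Summable (fun n => ‖x n‖ ^ 2) ∧ Summable (fun n => ‖y n‖ ^ 2) ∧
    ∀ T : B H, ω T = ∑' n, ⟪y n, T (x n)⟫_ℂ

/-- The weak* topology on `B H`: the topology induced by the normal functionals. -/
def weakStarTopology : TopologicalSpace (B H) :=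
  TopologicalSpace.induced
    (fun (T : B H) (ω : {ω : B H →ₗ[ℂ] ℂ // IsNormalFunctional H ω}) => ω.1 T)
    inferInstance

/-- A set of operators is weak* closed if it is closed in the weak* topology. -/
def WStarClosed (X : Set (B H)) : Prop := @IsClosed _ (weakStarTopology H) X

/-- The weak* closure of a set of operators. -/
def wStarClosure (X : Set (B H)) : Set (B H) := @closure _ (weakStarTopology H) X

/-- A map on `B H` is weak* continuous if it is continuous with respect to the
weak* topology on both sides. -/
def WStarContinuous (Φ : B H →L[ℂ] B H) : Prop :=
  @Continuous _ _ (weakStarTopology H) (weakStarTopology H) Φ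

variable {H}
variable [CompleteSpace H]

/-- A maximal abelian selfadjoint subalgebra of `B H`: an abelian selfadjoint
subalgebra which contains every operator commuting with it (equivalently, it
coincides with its own commutant). -/
def IsMasa (D : StarSubalgebra ℂ (B H)) : Prop :=
  (∀ A ∈ D, ∀ C ∈ D, A * C = C * A) ∧
  (∀ T : B H, (∀ A ∈ D, T * A = A * T) → T ∈ D)

/-- A Schur multiplier: a weak* continuous `D`-bimodule map on `B H`. -/
def IsSchurMultiplier (D : StarSubalgebra ℂ (B H)) (Φ : B H →L[ℂ] B H) : Prop :=
  WStarContinuous H Φ ∧ ∀ A ∈ D, ∀ C ∈ D, ∀ T : B H, Φ (A * T * C) = A * Φ T * C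

/-- A Schur idempotent: an idempotent Schur multiplier. -/
def IsSchurIdempotent (D : StarSubalgebra ℂ (B H)) (Φ : B H →L[ℂ] B H) : Prop :=
  IsSchurMultiplier D Φ ∧ Φ.comp Φ = Φ

/-- A subspace `X ⊆ B H` is a `D`-bimodule if `D X D ⊆ X`. -/
def IsBimodule (D : StarSubalgebra ℂ (B H)) (X : Submodule ℂ (B H)) : Prop :=
  ∀ A ∈ D, ∀ C ∈ D, ∀ T ∈ X, A * T * C ∈ X

/-- The Arveson distance `α(T, X)`. -/
def arveson (T : B H) (X : Set (B H)) : ℝ :=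
  ⨆ ξ : {ξ : H // ‖ξ‖ = 1}, ⨅ S : X, ‖T ξ.1 - S.1 ξ.1‖

/-- The set of hyperreflexivity constants of `X`. -/
def hyperSet (X : Set (B H)) : Set ℝ :=
  {k | 0 < k ∧ ∀ T : B H, Metric.infDist T X ≤ k * arveson T X}

/-- A subspace is hyperreflexive if `d(T, X) ≤ k ⬝ α(T, X)` for some `k > 0`. -/
def Hyperreflexive (X : Set (B H)) : Prop := (hyperSet X).Nonempty

/-- The hyperreflexivity constant `k(X)`: the least constant that works. -/
def hyperConst (X : Set (B H)) : ℝ := sInf (hyperSet X)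

/-- The set of constants `λ` witnessing that a Schur idempotent lies in `𝔉H`. -/
def lamSet (Φ : B H →L[ℂ] B H) : Set ℝ :=
  {l | 0 < l ∧ ∀ T : B H, ‖T - Φ T‖ ≤ l * arveson T (Set.range Φ)}

/-- The class `𝔉H` of Schur idempotents `Φ` such that
`‖T - Φ T‖ ≤ λ ⬝ α(T, ran Φ)` for some `λ > 0` and all `T`. -/
def MemFH (D : StarSubalgebra ℂ (B H)) (Φ : B H →L[ℂ] B H) : Prop :=
  IsSchurIdempotent D Φ ∧ (lamSet Φ).Nonempty

/-- The constant `λ(Φ)`: the least constant witnessing membership of `𝔉H`. -/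
def lam (Φ : B H →L[ℂ] B H) : ℝ := sInf (lamSet Φ)

/-- A ternary masa-bimodule condition: `S T* R ∈ M` whenever `S, T, R ∈ M`. -/
def IsTernary (M : Submodule ℂ (B H)) : Prop :=
  ∀ S ∈ M, ∀ T ∈ M, ∀ R ∈ M, S * star T * R ∈ M

end SchurHyper

open SchurHyper

namespace SchurHyper

open Filter Metric Topology

variable {H : Type*} [NormedAddCommGroup H] [InnerProductSpace ℂ H]

lemma arveson_nonneg (T : B H) (X : Set (B H)) : 0 ≤ arveson T X :=
  Real.iSup_nonneg fun _ => Real.iInf_nonneg fun _ => norm_nonneg _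

lemma arveson_anti (T : B H) {X Y : Set (B H)} (hXY : X ⊆ Y) (hX : X.Nonempty) :
    arveson T Y ≤ arveson T X := by
  obtain ⟨S₀, hS₀⟩ := hX
  have : Nonempty X := ⟨⟨S₀, hS₀⟩⟩
  have hbdd (Z : Set (B H)) (ξ : H) : BddBelow (Set.range fun S : Z => ‖T ξ - S.1 ξ‖) :=
    ⟨0, by rintro _ ⟨S, rfl⟩; exact norm_nonneg _⟩
  have hξ (ξ : {ξ : H // ‖ξ‖ = 1}) : ⨅ S : X, ‖T ξ.1 - S.1 ξ.1‖ ≤ ‖T - S₀‖ :=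
    calc ⨅ S : X, ‖T ξ.1 - S.1 ξ.1‖ ≤ ‖T ξ.1 - S₀ ξ.1‖ := ciInf_le (hbdd X ξ) ⟨S₀, hS₀⟩
      _ = ‖(T - S₀) ξ.1‖ := rfl
      _ ≤ ‖T - S₀‖ * ‖ξ.1‖ := (T - S₀).le_opNorm ξ.1
      _ = ‖T - S₀‖ := by rw [ξ.2, mul_one]
  refine Real.iSup_le (fun ξ => ?_) (arveson_nonneg T X)
  calc ⨅ S : Y, ‖T ξ.1 - S.1 ξ.1‖ ≤ ⨅ S : X, ‖T ξ.1 - S.1 ξ.1‖ :=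
        le_ciInf fun S => ciInf_le (hbdd Y ξ) ⟨S.1, hXY S.2⟩
    _ ≤ arveson T X := le_ciSup (f := fun ξ : {ξ : H // ‖ξ‖ = 1} => ⨅ S : X, ‖T ξ.1 - S.1 ξ.1‖)
        ⟨‖T - S₀‖, by rintro _ ⟨ξ, rfl⟩; exact hξ ξ⟩ ξ

lemma hyperConst_nonneg (X : Set (B H)) : 0 ≤ hyperConst X :=
  Real.sInf_nonneg fun _ hk => hk.1.le

lemma infDist_le_mul_arveson_of_hyperConst_lt {X : Set (B H)} (hX : Hyperreflexive X) {k : ℝ}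
    (hk : hyperConst X < k) (T : B H) : infDist T X ≤ k * arveson T X := by
  obtain ⟨k', hk', hk'k⟩ := exists_lt_of_csInf_lt hX hk
  exact (hk'.2 T).trans (mul_le_mul_of_nonneg_right hk'k.le (arveson_nonneg T X))

lemma norm_inner_apply_le (T : B H) (x y : H) : ‖⟪T x, y⟫_ℂ‖ ≤ ‖T‖ * ‖x‖ * ‖y‖ :=
  calc ‖⟪T x, y⟫_ℂ‖ ≤ ‖T x‖ * ‖y‖ := norm_inner_le_norm _ _
    _ ≤ ‖T‖ * ‖x‖ * ‖y‖ := by gcongr; exact T.le_opNorm x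

def vectorFunctional (x y : H) : B H →ₗ[ℂ] ℂ :=
  ((innerSL ℂ y).comp (ContinuousLinearMap.apply ℂ H x)).toLinearMap

lemma vectorFunctional_apply (x y : H) (T : B H) : vectorFunctional x y T = ⟪y, T x⟫_ℂ := rfl

lemma isNormalFunctional_vectorFunctional (x y : H) :
    IsNormalFunctional H (vectorFunctional x y) := by
  refine ⟨Pi.single 0 x, Pi.single 0 y, ?_, ?_, fun T => ?_⟩
  · exact summable_of_ne_finset_zero (s := {0}) fun n hn => by simp_all
  · exact summable_of_ne_finset_zero (s := {0}) fun n hn => by simp_all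
  · rw [tsum_eq_single 0 fun n hn => by simp [hn]]
    simp [vectorFunctional_apply]

lemma isInducing_weakStar :
    @IsInducing _ _ (weakStarTopology H) _
      (fun (T : B H) (ω : {ω : B H →ₗ[ℂ] ℂ // IsNormalFunctional H ω}) => ω.1 T) :=
  @IsInducing.mk _ _ (weakStarTopology H) _ _ rfl

lemma continuous_weakStar_of_isNormalFunctional {ω : B H →ₗ[ℂ] ℂ}
    (hω : IsNormalFunctional H ω) : Continuous[weakStarTopology H, _] ω := by
  let := weakStarTopology H
  exact (continuous_apply (⟨ω, hω⟩ : {ω : B H →ₗ[ℂ] ℂ // IsNormalFunctional H ω})).comp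
    isInducing_weakStar.continuous

-- Conjugate-linear in `x`, so that `continuousLinearMapOfBilin` reconstructs `T` from it.
def sesqForm (T : B H) (x y : H) : ℂ := ⟪T x, y⟫_ℂ

variable (H) in
/-- The weak operator topology. It agrees with `ContinuousLinearMapWOT` by the Riesz representation
theorem; inducing it from sesquilinear forms makes the Tychonoff argument for balls direct. -/
abbrev wotTopology : TopologicalSpace (B H) := .induced sesqForm inferInstance

lemma isInducing_sesqForm : @IsInducing _ _ (wotTopology H) _ (sesqForm (H := H)) :=
  @IsInducing.mk _ _ (wotTopology H) _ _ rfl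

lemma continuous_sesqForm_apply (x y : H) :
    Continuous[wotTopology H, _] fun T : B H => sesqForm T x y := by
  let := wotTopology H
  exact (continuous_apply y).comp ((continuous_apply x).comp isInducing_sesqForm.continuous)

def boundedSesqForms (R : ℝ) : Set (H → H → ℂ) :=
  {f | (∀ x x' y, f (x + x') y = f x y + f x' y) ∧
    (∀ (c : ℂ) x y, f (c • x) y = starRingEnd ℂ c • f x y) ∧
    (∀ x y y', f x (y + y') = f x y + f x y') ∧
    (∀ (c : ℂ) x y, f x (c • y) = c • f x y) ∧
    ∀ x y, ‖f x y‖ ≤ R * ‖x‖ * ‖y‖}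

lemma isClosed_boundedSesqForms (R : ℝ) : IsClosed (boundedSesqForms (H := H) R) := by
  simp only [boundedSesqForms, Set.ofPred_and, Set.ofPred_forall]
  refine .inter ?_ (.inter ?_ (.inter ?_ (.inter ?_ ?_))) <;>
    repeat' refine isClosed_iInter fun _ => ?_
  all_goals first
    | exact isClosed_eq (by fun_prop) (by fun_prop)
    | exact isClosed_le (by fun_prop) (by fun_prop)

lemma isClosed_closedBall_wot (T : B H) {c : ℝ} (hc : 0 ≤ c) :
    IsClosed[wotTopology H] (closedBall T c) := by
  let := wotTopology H
  have hball : closedBall T c = ⋂ (x : H) (y : H) (_ : ‖x‖ = 1) (_ : ‖y‖ = 1),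
      {S | (sesqForm S x y - sesqForm T x y).re ≤ c} := by
    ext S
    simp only [mem_closedBall, dist_eq_norm, Set.mem_iInter, Set.mem_ofPred_eq]
    have hsesq : ∀ x y, sesqForm S x y - sesqForm T x y = ⟪(S - T) x, y⟫_ℂ := fun x y => by
      simp [sesqForm]
    simp only [hsesq]
    refine ⟨fun h x y hx hy => ?_, fun h => ?_⟩
    · calc (⟪(S - T) x, y⟫_ℂ).re ≤ ‖⟪(S - T) x, y⟫_ℂ‖ := Complex.re_le_norm _
        _ ≤ ‖S - T‖ * ‖x‖ * ‖y‖ := norm_inner_apply_le _ _ _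
        _ ≤ c := by rw [hx, hy, mul_one, mul_one]; exact h
    · exact ContinuousLinearMap.opNorm_le_of_re_inner_le hc fun x y hx hy => h x y hx hy
  rw [hball]
  refine isClosed_iInter fun x => isClosed_iInter fun y => isClosed_iInter fun _ =>
    isClosed_iInter fun _ => isClosed_le ?_ continuous_const
  exact Complex.continuous_re.comp ((continuous_sesqForm_apply x y).sub continuous_const)

lemma weakStarTopology_le_wotTopology : weakStarTopology H ≤ wotTopology H := by
  rw [← continuous_iff_le_induced]
  let := weakStarTopology H
  refine continuous_pi fun x => continuous_pi fun y => ?_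
  have hconj : (fun T : B H => sesqForm T x y) = fun T => starRingEnd ℂ (vectorFunctional x y T) :=
    funext fun T => (inner_conj_symm _ _).symm
  rw [hconj]
  exact Complex.continuous_conj.comp
    (continuous_weakStar_of_isNormalFunctional (isNormalFunctional_vectorFunctional x y))

lemma isClosed_closedBall_weakStar (T : B H) {c : ℝ} (hc : 0 ≤ c) :
    WStarClosed H (closedBall T c) :=
  (isClosed_closedBall_wot T hc).mono weakStarTopology_le_wotTopology

lemma continuousOn_wot_of_isNormalFunctional {ω : B H →ₗ[ℂ] ℂ} (hω : IsNormalFunctional H ω)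
    (R : ℝ) : @ContinuousOn _ _ (wotTopology H) _ ω (closedBall 0 R) := by
  let := wotTopology H
  obtain ⟨x, y, hx, hy, hrep⟩ := hω
  have hsum : Summable fun n => ‖x n‖ * ‖y n‖ :=
    Real.summable_mul_of_Lp_Lq_of_nonneg Real.HolderConjugate.two_two (fun _ => norm_nonneg _)
      (fun _ => norm_nonneg _) (by simpa using hx) (by simpa using hy)
  rw [show ⇑ω = fun T => ∑' n, starRingEnd ℂ (sesqForm T (x n) (y n)) from
    funext fun T => by simp only [hrep, sesqForm, inner_conj_symm]]
  refine continuousOn_tsum (fun n => (Complex.continuous_conj.comp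
    (continuous_sesqForm_apply (x n) (y n))).continuousOn) (hsum.mul_left R) fun n T hT => ?_
  rw [RCLike.norm_conj, ← mul_assoc]
  calc ‖sesqForm T (x n) (y n)‖ ≤ ‖T‖ * ‖x n‖ * ‖y n‖ := norm_inner_apply_le T _ _
    _ ≤ R * ‖x n‖ * ‖y n‖ := by gcongr; exact mem_closedBall_zero_iff.1 hT

variable [CompleteSpace H]

lemma image_sesqForm_closedBall {R : ℝ} (hR : 0 ≤ R) :
    sesqForm '' closedBall (0 : B H) R = boundedSesqForms R := by
  ext f
  constructor
  · rintro ⟨T, hT, rfl⟩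
    rw [mem_closedBall_zero_iff] at hT
    refine ⟨fun x x' y => ?_, fun c x y => ?_, fun x y y' => ?_, fun c x y => ?_, fun x y => ?_⟩
    · simp [sesqForm]
    · simp [sesqForm, mul_comm]
    · simp [sesqForm]
    · simp [sesqForm]
    · exact (norm_inner_apply_le T x y).trans (by gcongr)
  · rintro ⟨hadd₁, hsmul₁, hadd₂, hsmul₂, hbound⟩
    let B : H →L⋆[ℂ] H →L[ℂ] ℂ :=
      (LinearMap.mk₂'ₛₗ _ _ f hadd₁ hsmul₁ hadd₂ hsmul₂).mkContinuous₂ R hbound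
    refine ⟨InnerProductSpace.continuousLinearMapOfBilin B, ?_,
      funext₂ fun x y => InnerProductSpace.continuousLinearMapOfBilin_apply B x y⟩
    refine mem_closedBall_zero_iff.2 (ContinuousLinearMap.opNorm_le_of_re_inner_le hR
      fun x y hx hy => ?_)
    rw [InnerProductSpace.continuousLinearMapOfBilin_apply]
    calc RCLike.re (B x y) ≤ ‖B x y‖ := RCLike.re_le_norm _
      _ ≤ R * ‖x‖ * ‖y‖ := hbound x y
      _ = R := by rw [hx, hy, mul_one, mul_one]

lemma isCompact_closedBall_wot (T : B H) {c : ℝ} (hc : 0 ≤ c) :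
    @IsCompact _ (wotTopology H) (closedBall T c) := by
  let := wotTopology H
  have hR : 0 ≤ ‖T‖ + c := by positivity
  have hK : IsCompact (closedBall (0 : B H) (‖T‖ + c)) := by
    rw [isInducing_sesqForm.isCompact_iff, image_sesqForm_closedBall hR]
    refine (isCompact_univ_pi fun x => isCompact_univ_pi fun y =>
      isCompact_closedBall (0 : ℂ) ((‖T‖ + c) * ‖x‖ * ‖y‖)).of_isClosed_subset
      (isClosed_boundedSesqForms _) fun f hf x _ y _ => ?_
    exact mem_closedBall_zero_iff.2 (hf.2.2.2.2 x y)
  exact hK.of_isClosed_subset (isClosed_closedBall_wot T hc)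
    (closedBall_subset_closedBall' (by rw [dist_zero_right, add_comm]))

lemma isCompact_closedBall_weakStar (T : B H) {c : ℝ} (hc : 0 ≤ c) :
    @IsCompact _ (weakStarTopology H) (closedBall T c) := by
  refine (@IsInducing.isCompact_iff _ _ (weakStarTopology H) _ _ _ isInducing_weakStar).2 ?_
  refine @IsCompact.image_of_continuousOn _ _ (wotTopology H) _ _ _
    (isCompact_closedBall_wot T hc) ?_
  let := wotTopology H
  refine continuousOn_pi.2 fun ω => ?_
  exact (continuousOn_wot_of_isNormalFunctional ω.2 (‖T‖ + c)).mono
    (closedBall_subset_closedBall' (by rw [dist_zero_right, add_comm]))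

lemma nonempty_closedBall_inter_iInter {V : ℕ → Set (B H)} (hV : Antitone V)
    (hcl : ∀ n, WStarClosed H (V n)) (T : B H) {c : ℝ} (hc : 0 ≤ c)
    (h : ∀ᶠ n in atTop, (closedBall T c ∩ V n).Nonempty) :
    (closedBall T c ∩ ⋂ n, V n).Nonempty := by
  let := weakStarTopology H
  obtain ⟨N, hN⟩ := eventually_atTop.1 h
  obtain ⟨a, ha⟩ := IsCompact.nonempty_iInter_of_sequence_nonempty_isCompact_isClosed
    (fun n => closedBall T c ∩ V (n + N))
    (fun n => Set.inter_subset_inter_right _ (hV (by omega)))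
    (fun n => hN _ (by omega))
    ((isCompact_closedBall_weakStar T hc).inter_right (by rw [zero_add]; exact hcl N))
    (fun n => (isClosed_closedBall_weakStar T hc).inter (hcl _))
  simp only [Set.mem_iInter, Set.mem_inter_iff] at ha
  exact ⟨a, (ha 0).1, Set.mem_iInter.2 fun n => hV (Nat.le_add_right n N) (ha n).2⟩

lemma mem_hyperSet_iInter {U : ℕ → Submodule ℂ (B H)} (hU : Antitone U)
    (hcl : ∀ n, WStarClosed H (U n : Set (B H))) (hhr : ∀ n, Hyperreflexive (U n : Set (B H)))
    {k : ℝ} (hk : ∀ᶠ n in atTop, hyperConst (U n : Set (B H)) < k) :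
    k ∈ hyperSet (⋂ n, (U n : Set (B H))) := by
  obtain ⟨n₀, hn₀⟩ := hk.exists
  have hk0 : 0 < k := (hyperConst_nonneg _).trans_lt hn₀
  refine ⟨hk0, fun T => le_of_forall_pos_le_add fun ε hε => ?_⟩
  set α := arveson T (⋂ n, (U n : Set (B H)))
  have hI : (⋂ n, (U n : Set (B H))).Nonempty := ⟨0, Set.mem_iInter.2 fun n => (U n).zero_mem⟩
  have hnear : ∀ᶠ n in atTop, (closedBall T (k * α + ε) ∩ U n).Nonempty := hk.mono fun n hn => by
    have hdist : infDist T (U n) < k * α + ε :=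
      calc infDist T (U n) ≤ k * arveson T (U n) :=
            infDist_le_mul_arveson_of_hyperConst_lt (hhr n) hn T
        _ ≤ k * α := by gcongr; exact arveson_anti T (Set.iInter_subset _ n) hI
        _ < k * α + ε := lt_add_of_pos_right _ hε
    obtain ⟨Z, hZ, hTZ⟩ := (infDist_lt_iff ⟨0, (U n).zero_mem⟩).1 hdist
    exact ⟨Z, mem_closedBall'.2 hTZ.le, hZ⟩
  obtain ⟨a, ha, haU⟩ := nonempty_closedBall_inter_iInter (fun _ _ h => hU h) hcl T
    (add_nonneg (mul_nonneg hk0.le (arveson_nonneg _ _)) hε.le) hnear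
  exact (infDist_le_dist_of_mem haU).trans (mem_closedBall'.1 ha)

end SchurHyper

theorem stmt11_general {H : Type*} [NormedAddCommGroup H] [InnerProductSpace ℂ H] [CompleteSpace H]
    (U : ℕ → Submodule ℂ (B H))
    (hcl : ∀ n, WStarClosed H (U n : Set (B H)))
    (hhr : ∀ n, Hyperreflexive (U n : Set (B H)))
    (hdec : ∀ n, U (n + 1) ≤ U n)
    (hbdd : BddAbove (Set.range fun n => hyperConst (U n : Set (B H)))) :
    Hyperreflexive (⋂ n, (U n : Set (B H))) ∧
    hyperConst (⋂ n, (U n : Set (B H))) ≤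
      Filter.limsup (fun n => hyperConst (U n : Set (B H))) Filter.atTop := by
  set L := Filter.limsup (fun n => hyperConst (U n : Set (B H))) Filter.atTop
  have hsub : Set.Ioi L ⊆ hyperSet (⋂ n, (U n : Set (B H))) := fun k hk =>
    mem_hyperSet_iInter (antitone_nat_of_succ_le hdec) hcl hhr
      (Filter.eventually_lt_of_limsup_lt hk hbdd.isBoundedUnder_of_range)
  refine ⟨⟨L + 1, hsub (lt_add_one L)⟩, ?_⟩
  calc hyperConst (⋂ n, (U n : Set (B H)))
      ≤ sInf (Set.Ioi L) := csInf_le_csInf ⟨0, fun _ hk => hk.1.le⟩ Set.nonempty_Ioi hsub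
    _ = L := csInf_Ioi

/-- a decreasing sequence of weak* closed hyperreflexive subspaces
with uniformly bounded hyperreflexivity constants has hyperreflexive
intersection `U`, with `k(U) ≤ limsupₙ k(Uₙ)`. -/
theorem stmt11 {H : Type*} [NormedAddCommGroup H] [InnerProductSpace ℂ H] [CompleteSpace H]
    [TopologicalSpace.SeparableSpace H]
    (U : ℕ → Submodule ℂ (B H))
    (hcl : ∀ n, WStarClosed H (U n : Set (B H)))
    (hhr : ∀ n, Hyperreflexive (U n : Set (B H)))
    (hdec : ∀ n, U (n + 1) ≤ U n)
    (hbdd : BddAbove (Set.range fun n => hyperConst (U n : Set (B H)))) :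
    Hyperreflexive (⋂ n, (U n : Set (B H))) ∧
    hyperConst (⋂ n, (U n : Set (B H))) ≤
      Filter.limsup (fun n => hyperConst (U n : Set (B H))) Filter.atTop :=
  stmt11_general U hcl hhr hdec hbdd
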